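/- Let A=(S,R) be a finite argumentation network and let h be an assignment taking only the two values (⊤,⊤) and (⊥,⊥) on atoms of S. Then t ⊨_h Θ⁰_A, where Θ⁰_A = ⋀_{x∈S}(x ↔ ⋀_{yRx}¬y), if and only if λ_h is a stable extension of A (a complete extension with λ_h(x)≠und for all x). -/

import Mathlib

/-- The three Caminada labels. -/
inductive Label where
  | in_ : Label
  | out : Label
  | und : Label
deriving DecidableEq

/-- Propositional intuitionistic formulas over atoms `α`, with the
distinguished constant `nconst` (the paper's `n`). -/
inductive Form (α : Type) where
  | atom : α → Form α
  | nconst : Form α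
  | top : Form α
  | bot : Form α
  | and : Form α → Form α → Form α
  | or : Form α → Form α → Form α
  | imp : Form α → Form α → Form α
  | neg : Form α → Form α

/-- Forcing in the two-world Kripke model: world `false` is `t`, world `true`
is `s`, with `t < s` (i.e. the Bool order). `h` assigns to each atom its pair
of truth values (at `t`, at `s`). The constant `n` has value `(⊥,⊤)`. -/
def force {α : Type} (h : α → Bool × Bool) : Bool → Form α → Prop
  | w, .atom x => (if w then (h x).2 else (h x).1) = true
  | w, .nconst => w = true
  | _, .top => True
  | _, .bot => False
  | w, .and A B => force h w A ∧ force h w B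
  | w, .or A B => force h w A ∨ force h w B
  | w, .imp A B => ∀ v : Bool, w ≤ v → force h v A → force h v B
  | w, .neg A => ∀ v : Bool, w ≤ v → ¬ force h v A

/-- An assignment is legitimate when no atom gets the forbidden value `(⊤,⊥)`. -/
def Persistent {α : Type} (h : α → Bool × Bool) : Prop :=
  ∀ x, (h x).1 = true → (h x).2 = true

def bigAnd {α : Type} : List (Form α) → Form α
  | [] => .top
  | f :: fs => .and f (bigAnd fs)

def bigOr {α : Type} : List (Form α) → Form α
  | [] => .bot
  | f :: fs => .or f (bigOr fs)

/-- The list of attackers of `x` in the network `(α, R)`. -/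
noncomputable def attackers {α : Type} [Fintype α] (R : α → α → Prop) [DecidableRel R] (x : α) : List α :=
  (Finset.univ.filter (fun y => R y x)).toList

/-- (a1)  `x → (n ∨ ⋀_{yRx} ¬y)` -/
noncomputable def fa1 {α : Type} [Fintype α] (R : α → α → Prop) [DecidableRel R] (x : α) : Form α :=
  .imp (.atom x) (.or .nconst (bigAnd ((attackers R x).map (fun y => .neg (.atom y)))))

/-- (a2)  `(⋀_{yRx} ¬y) → (n ∨ x)` -/
noncomputable def fa2 {α : Type} [Fintype α] (R : α → α → Prop) [DecidableRel R] (x : α) : Form α :=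
  .imp (bigAnd ((attackers R x).map (fun y => .neg (.atom y)))) (.or .nconst (.atom x))

/-- (b1)  `¬x → (n ∨ ⋁_{yRx} y)` -/
noncomputable def fb1 {α : Type} [Fintype α] (R : α → α → Prop) [DecidableRel R] (x : α) : Form α :=
  .imp (.neg (.atom x)) (.or .nconst (bigOr ((attackers R x).map (fun y => .atom y))))

/-- (b2)  `(⋁_{yRx} y) → (¬x ∨ n)` -/
noncomputable def fb2 {α : Type} [Fintype α] (R : α → α → Prop) [DecidableRel R] (x : α) : Form α :=
  .imp (bigOr ((attackers R x).map (fun y => .atom y))) (.or (.neg (.atom x)) .nconst)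

/-- `h` is a model of the theory `Δ_A`: every formula of `Δ_A` holds at `t`. -/
def ModelsDelta {α : Type} [Fintype α] (h : α → Bool × Bool)
    (R : α → α → Prop) [DecidableRel R] : Prop :=
  ∀ x, force h false (fa1 R x) ∧ force h false (fa2 R x) ∧
    force h false (fb1 R x) ∧ force h false (fb2 R x)

/-- Caminada labelling / complete extension of the network `(α, R)`. -/
def IsCompleteExt {α : Type} (R : α → α → Prop) (l : α → Label) : Prop :=
  (∀ x, l x = .in_ ↔ ∀ y, R y x → l y = .out) ∧
  (∀ x, l x = .out ↔ ∃ y, R y x ∧ l y = .in_) ∧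
  (∀ x, l x = .und ↔ ((∀ y, R y x → l y ≠ .in_) ∧ ∃ y, R y x ∧ l y = .und))

/-- The labelling `λ_h` induced by an assignment `h`. -/
def lamOf {α : Type} (h : α → Bool × Bool) (x : α) : Label :=
  if h x = (true, true) then .in_ else if h x = (false, false) then .out else .und

/-- The assignment `h_λ` induced by a labelling `λ`. -/
def assignOf {α : Type} (l : α → Label) (x : α) : Bool × Bool :=
  match l x with
  | .in_ => (true, true)
  | .out => (false, false)
  | .und => (false, true)

/-- The conjunct `x ↔ ⋀_{yRx} ¬y` of `Θ⁰_A`, written as a pair of implications. -/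
noncomputable def theta0 {α : Type} [Fintype α] (R : α → α → Prop) [DecidableRel R]
    (x : α) : Form α :=
  .and (.imp (.atom x) (bigAnd ((attackers R x).map (fun y => .neg (.atom y)))))
       (.imp (bigAnd ((attackers R x).map (fun y => .neg (.atom y)))) (.atom x))

/-! On a two-valued assignment forcing does not depend on the world, so `Θ⁰_A` says classically
that `x` is `in` exactly when all its attackers are `out`. For a labelling without `und` this
condition (C1) already implies (C2) and (C3). -/

section TwoValued

variable {α : Type}

lemma mem_attackers [Fintype α] (R : α → α → Prop) [DecidableRel R] {x y : α} :
    y ∈ attackers R x ↔ R y x := by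
  simp [attackers]

lemma force_bigAnd (h : α → Bool × Bool) (w : Bool) (L : List (Form α)) :
    force h w (bigAnd L) ↔ ∀ A ∈ L, force h w A := by
  induction L with
  | nil => simp [bigAnd, force]
  | cons A L ih => simp [bigAnd, force, ih]

lemma isCompleteExt_iff_of_ne_und (R : α → α → Prop) (l : α → Label)
    (hl : ∀ x, l x ≠ .und) :
    IsCompleteExt R l ↔ ∀ x, l x = .in_ ↔ ∀ y, R y x → l y = .out := by
  have out_iff_ne_in : ∀ x, l x = .out ↔ l x ≠ .in_ := by
    intro x; cases hx : l x <;> simp_all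
  refine ⟨fun hl => hl.1, fun hin => ⟨hin, fun x => ?_, fun x => ?_⟩⟩
  · rw [out_iff_ne_in, ne_eq, hin x]
    simp only [out_iff_ne_in, not_forall, not_not, exists_prop]
  · simp [hl]

variable {h : α → Bool × Bool} (htv : ∀ x, h x = (true, true) ∨ h x = (false, false))
include htv

lemma force_atom_of_twoValued (w : Bool) (x : α) :
    force h w (.atom x) ↔ lamOf h x = .in_ := by
  rcases htv x with hx | hx <;> cases w <;> simp [force, lamOf, hx]

lemma force_neg_atom_of_twoValued (w : Bool) (x : α) :
    force h w (.neg (.atom x)) ↔ lamOf h x = .out := by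
  rcases htv x with hx | hx <;> simp [force, lamOf, hx]

lemma lamOf_ne_und_of_twoValued (x : α) : lamOf h x ≠ .und := by
  rcases htv x with hx | hx <;> simp [lamOf, hx]

lemma force_theta0_of_twoValued [Fintype α] (R : α → α → Prop) [DecidableRel R] (x : α) :
    force h false (theta0 R x) ↔ (lamOf h x = .in_ ↔ ∀ y, R y x → lamOf h y = .out) := by
  simp only [theta0, force.eq_5, force.eq_7, force_bigAnd, List.forall_mem_map, mem_attackers,
    force_atom_of_twoValued htv, force_neg_atom_of_twoValued htv, Bool.false_le, forall_const,
    iff_def]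

end TwoValued

theorem stmt8_general {α : Type} [Fintype α] (R : α → α → Prop) [DecidableRel R]
    (h : α → Bool × Bool)
    (htv : ∀ x, h x = (true, true) ∨ h x = (false, false)) :
    (∀ x, force h false (theta0 R x)) ↔
      (IsCompleteExt R (lamOf h) ∧ ∀ x, lamOf h x ≠ .und) := by
  have hund := lamOf_ne_und_of_twoValued htv
  rw [and_iff_left hund, isCompleteExt_iff_of_ne_und R _ hund]
  exact forall_congr' (force_theta0_of_twoValued htv R)

/-- For a two-valued assignment `h` (only values `(⊤,⊤)` and `(⊥,⊥)`):
`t ⊨_h Θ⁰_A` iff `λ_h` is a stable extension of `A`, i.e. a complete extension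
with no `und` label. -/
theorem stmt8 {α : Type} [Fintype α] [Nonempty α] (R : α → α → Prop) [DecidableRel R]
    (h : α → Bool × Bool)
    (htv : ∀ x, h x = (true, true) ∨ h x = (false, false)) :
    (∀ x, force h false (theta0 R x)) ↔
      (IsCompleteExt R (lamOf h) ∧ ∀ x, lamOf h x ≠ .und) :=
  stmt8_general R h htv
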